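/- Every residually torsion-free nilpotent group is bi-orderable. -/

import Mathlib

/-!
A bi-order on a group is the same thing as a conjugation-invariant positive cone: a
multiplicatively closed set `P` such that `G` is the disjoint union of `P`, `{1}` and `P⁻¹`. A torsion-free abelian group has one
by Zorn's lemma. A central extension of bi-orderable groups is bi-orderable: compare first in the
quotient, then in the centre. If the centre of `G` is torsion-free then so is the centre of
`G ⧸ center G`, so induction on the nilpotency class bi-orders every nilpotent group with
torsion-free centre. Finally, a residually torsion-free nilpotent group embeds into the product of
its torsion-free nilpotent quotients, and a product of bi-orderable groups is bi-ordered
lexicographically along a well-order of the index set.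
-/

/-- A group is bi-orderable if it admits a strict total order invariant under
both left and right multiplication. -/
def BiOrderable (G : Type*) [Group G] : Prop :=
  ∃ r : G → G → Prop, IsStrictTotalOrder G r ∧
    (∀ f g h : G, r g h → r (f * g) (f * h)) ∧
    (∀ f g h : G, r g h → r (g * f) (h * f))

open Subgroup
open scoped IsMulCommutative

structure IsBiOrderCone {G : Type*} [Group G] (P : Set G) : Prop where
  mul_mem {a b : G} : a ∈ P → b ∈ P → a * b ∈ P
  one_notMem : (1 : G) ∉ P
  mem_or_inv_mem {a : G} : a ≠ 1 → a ∈ P ∨ a⁻¹ ∈ P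
  conj_mem {a : G} (g : G) : a ∈ P → g * a * g⁻¹ ∈ P

namespace IsBiOrderCone

variable {G H : Type*} [Group G] [Group H] {P : Set G}

theorem biOrderable (hP : IsBiOrderCone P) : BiOrderable G := by
  refine ⟨fun a b => a⁻¹ * b ∈ P, { trichotomous := ?_, irrefl := ?_, trans := ?_ }, ?_, ?_⟩
  · intro a b hab hba
    by_contra hne
    have : a⁻¹ * b ≠ 1 := by rwa [Ne, inv_mul_eq_one]
    rcases hP.mem_or_inv_mem this with h | h
    · exact hab h
    · exact hba (by simpa using h)
  · intro a h
    exact hP.one_notMem (by simpa using h)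
  · intro a b c hab hbc
    simpa [mul_assoc] using hP.mul_mem hab hbc
  · intro f a b h
    simpa [mul_assoc] using h
  · intro f a b h
    simpa [mul_assoc] using hP.conj_mem f⁻¹ h

theorem preimage (hP : IsBiOrderCone P) (f : H →* G) (hf : Function.Injective f) :
    IsBiOrderCone (f ⁻¹' P) where
  mul_mem ha hb := by simpa using hP.mul_mem ha hb
  one_notMem := by simpa using hP.one_notMem
  mem_or_inv_mem ha := by simpa using hP.mem_or_inv_mem ((map_ne_one_iff f hf).2 ha)
  conj_mem g ha := by simpa using hP.conj_mem (f g) ha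

theorem pi {ι : Type*} [LinearOrder ι] [WellFoundedLT ι] {H : ι → Type*}
    [∀ i, Group (H i)] {P : ∀ i, Set (H i)} (hP : ∀ i, IsBiOrderCone (P i)) :
    IsBiOrderCone {f : ∀ i, H i | ∃ i, f i ∈ P i ∧ ∀ j < i, f j = 1} where
  mul_mem := by
    rintro f f' ⟨i, hi, hlt⟩ ⟨i', hi', hlt'⟩
    rcases lt_trichotomy i i' with h | rfl | h
    · exact ⟨i, by simpa [hlt' i h] using hi, fun j hj => by simp [hlt j hj, hlt' j (hj.trans h)]⟩
    · exact ⟨i, (hP i).mul_mem hi hi', fun j hj => by simp [hlt j hj, hlt' j hj]⟩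
    · exact ⟨i', by simpa [hlt i' h] using hi', fun j hj => by simp [hlt j (hj.trans h), hlt' j hj]⟩
  one_notMem := by
    rintro ⟨i, hi, -⟩
    exact (hP i).one_notMem hi
  mem_or_inv_mem {f} hf := by
    obtain ⟨i, hi, hmin⟩ := wellFounded_lt.has_min {i | f i ≠ 1} (Function.ne_iff.1 hf)
    have hlt : ∀ j < i, f j = 1 := fun j hj => by_contra fun h => hmin j h hj
    refine ((hP i).mem_or_inv_mem hi).imp (fun h => ⟨i, h, hlt⟩) fun h => ⟨i, h, ?_⟩
    simpa using hlt
  conj_mem g := fun ⟨i, hi, hlt⟩ => ⟨i, (hP i).conj_mem (g i) hi, fun j hj => by simp [hlt j hj]⟩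

theorem extension {N : Subgroup G} [N.Normal] {PN : Set N} {PQ : Set (G ⧸ N)}
    (hN : IsBiOrderCone PN) (hinv : ∀ g : G, ∀ n ∈ PN, MulAut.conjNormal g n ∈ PN)
    (hQ : IsBiOrderCone PQ) :
    IsBiOrderCone ({g : G | (g : G ⧸ N) ∈ PQ} ∪ Subtype.val '' PN) where
  mul_mem := by
    rintro a b (ha | ⟨a, ha, rfl⟩) (hb | ⟨b, hb, rfl⟩)
    · exact Or.inl (hQ.mul_mem ha hb)
    · left
      simpa [(QuotientGroup.eq_one_iff _).2 b.2] using ha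
    · left
      simpa [(QuotientGroup.eq_one_iff _).2 a.2] using hb
    · exact Or.inr ⟨a * b, hN.mul_mem ha hb, rfl⟩
  one_notMem := by
    rintro (h | ⟨n, hn, hn1⟩)
    · exact hQ.one_notMem h
    · obtain rfl : n = 1 := Subtype.ext hn1
      exact hN.one_notMem hn
  mem_or_inv_mem {g} hg := by
    by_cases hgN : g ∈ N
    · have : (⟨g, hgN⟩ : N) ≠ 1 := fun h => hg (congrArg Subtype.val h)
      exact (hN.mem_or_inv_mem this).imp (fun h => Or.inr ⟨_, h, rfl⟩)
        fun h => Or.inr ⟨_, h, rfl⟩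
    · have : (g : G ⧸ N) ≠ 1 := by rwa [Ne, QuotientGroup.eq_one_iff]
      exact (hQ.mem_or_inv_mem this).imp Or.inl Or.inl
  conj_mem g ha := by
    rcases ha with ha | ⟨n, hn, rfl⟩
    · exact Or.inl (hQ.conj_mem (g : G ⧸ N) ha)
    · exact Or.inr ⟨_, hinv g n hn, MulAut.conjNormal_apply g n⟩

end IsBiOrderCone

theorem biOrderable_iff_exists_isBiOrderCone {G : Type*} [Group G] :
    BiOrderable G ↔ ∃ P : Set G, IsBiOrderCone P := by
  refine ⟨fun ⟨r, hr, hleft, hright⟩ => ⟨{a | r 1 a}, ?_⟩, fun ⟨P, hP⟩ => hP.biOrderable⟩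
  exact {
    mul_mem := fun {a b} ha hb => hr.trans _ _ _ hb (by simpa using hright b 1 a ha)
    one_notMem := hr.irrefl 1
    mem_or_inv_mem := fun {a} ha => by
      by_contra! h
      refine ha (hr.trichotomous a 1 (fun h' => h.2 ?_) h.1)
      simpa using hleft a⁻¹ a 1 h'
    conj_mem := fun {a} g ha => by
      simpa using hright g⁻¹ g (g * a) (by simpa using hleft g 1 a ha) }

namespace BiOrderable

variable {G H : Type*} [Group G] [Group H]

theorem of_injective (f : G →* H) (hf : Function.Injective f) (hH : BiOrderable H) :
    BiOrderable G := by
  obtain ⟨P, hP⟩ := biOrderable_iff_exists_isBiOrderCone.1 hH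
  exact (hP.preimage f hf).biOrderable

theorem pi {ι : Type*} {H : ι → Type*} [∀ i, Group (H i)] (hH : ∀ i, BiOrderable (H i)) :
    BiOrderable (∀ i, H i) := by
  obtain ⟨_, _⟩ := exists_wellFoundedLT ι
  choose P hP using fun i => biOrderable_iff_exists_isBiOrderCone.1 (hH i)
  exact (IsBiOrderCone.pi hP).biOrderable

theorem of_residually {ι : Type*} (K : ι → Subgroup G) [∀ i, (K i).Normal]
    (hK : ∀ g : G, g ≠ 1 → ∃ i, g ∉ K i) (hQ : ∀ i, BiOrderable (G ⧸ K i)) : BiOrderable G := by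
  refine (pi hQ).of_injective (MonoidHom.pi fun i => QuotientGroup.mk' (K i)) ?_
  refine (injective_iff_map_eq_one _).2 fun g hg => by_contra fun hne => ?_
  obtain ⟨i, hi⟩ := hK g hne
  exact hi ((QuotientGroup.eq_one_iff g).1 (congrFun hg i))

theorem of_center (hZ : BiOrderable (center G)) (hQ : BiOrderable (G ⧸ center G)) :
    BiOrderable G := by
  obtain ⟨PZ, hPZ⟩ := biOrderable_iff_exists_isBiOrderCone.1 hZ
  obtain ⟨PQ, hPQ⟩ := biOrderable_iff_exists_isBiOrderCone.1 hQ
  refine (hPZ.extension (fun g n hn => ?_) hPQ).biOrderable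
  convert hn
  ext
  rw [MulAut.conjNormal_apply, mem_center_iff.1 n.2 g, mul_inv_cancel_right]

end BiOrderable

section MulClosed

variable {M : Type*} [Monoid M]

def IsMulClosedAvoidingOne (P : Set M) : Prop :=
  (∀ a ∈ P, ∀ b ∈ P, a * b ∈ P) ∧ (1 : M) ∉ P

theorem IsMulClosedAvoidingOne.pow_mem {P : Set M} (hP : IsMulClosedAvoidingOne P) {a : M}
    (ha : a ∈ P) : ∀ {n : ℕ}, n ≠ 0 → a ^ n ∈ P
  | 1, _ => by simpa using ha
  | n + 2, _ => by
    rw [pow_succ]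
    exact hP.1 _ (hP.pow_mem ha n.succ_ne_zero) _ ha

theorem exists_maximal_isMulClosedAvoidingOne :
    ∃ P : Set M, Maximal IsMulClosedAvoidingOne P := by
  refine zorn_subset _ fun c hc hchain => ⟨⋃₀ c, ⟨?_, ?_⟩, fun s hs => Set.subset_sUnion_of_mem hs⟩
  · rintro a ⟨S, hS, ha⟩ b ⟨T, hT, hb⟩
    rcases hchain.total hS hT with h | h
    · exact ⟨T, hT, (hc hT).1 a (h ha) b hb⟩
    · exact ⟨S, hS, (hc hS).1 a ha b (h hb)⟩
  · rintro ⟨S, hS, h1⟩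
    exact (hc hS).2 h1

end MulClosed

section CommGroup

variable {G : Type*} [CommGroup G] [IsMulTorsionFree G]

/-- Adjoining `g` to a maximal `P` yields `{p * g ^ n} ∪ {g ^ (n + 1)}`, which must contain `1`. -/
theorem exists_inv_pow_mem_of_maximal {P : Set G} (hP : Maximal IsMulClosedAvoidingOne P)
    {g : G} (hg : g ≠ 1) (hgP : g ∉ P) : ∃ n : ℕ, (g ^ n)⁻¹ ∈ P := by
  set Q : Set G := {x | ∃ n : ℕ, x = g ^ (n + 1) ∨ ∃ p ∈ P, x = p * g ^ n}
  have hQmul : ∀ a ∈ Q, ∀ b ∈ Q, a * b ∈ Q := by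
    rintro _ ⟨m, rfl | ⟨p, hp, rfl⟩⟩ _ ⟨n, rfl | ⟨q, hq, rfl⟩⟩
    · exact ⟨m + n + 1, Or.inl (by rw [← pow_add]; ring_nf)⟩
    · exact ⟨m + 1 + n, Or.inr ⟨q, hq, by rw [mul_left_comm, ← pow_add]⟩⟩
    · exact ⟨m + (n + 1), Or.inr ⟨p, hp, by rw [mul_assoc, ← pow_add]⟩⟩
    · exact ⟨m + n, Or.inr ⟨p * q, hP.1.1 _ hp _ hq, by rw [pow_add, mul_mul_mul_comm]⟩⟩
  have hPQ : P ⊆ Q := fun p hp => ⟨0, Or.inr ⟨p, hp, by simp⟩⟩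
  have hgQ : g ∈ Q := ⟨0, Or.inl (by simp)⟩
  have h1Q : (1 : G) ∈ Q := by
    by_contra h1Q
    exact hgP (hP.2 ⟨hQmul, h1Q⟩ hPQ hgQ)
  obtain ⟨n, h | ⟨p, hp, h⟩⟩ := h1Q
  · exact absurd ((pow_eq_one_iff_left n.succ_ne_zero).1 h.symm) hg
  · exact ⟨n, by rwa [← eq_inv_of_mul_eq_one_left h.symm]⟩

theorem mem_or_inv_mem_of_maximal {P : Set G} (hP : Maximal IsMulClosedAvoidingOne P)
    {g : G} (hg : g ≠ 1) : g ∈ P ∨ g⁻¹ ∈ P := by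
  by_contra! h
  obtain ⟨m, hm⟩ := exists_inv_pow_mem_of_maximal hP hg h.1
  obtain ⟨n, hn⟩ := exists_inv_pow_mem_of_maximal hP (inv_ne_one.2 hg) h.2
  rw [inv_pow, inv_inv] at hn
  have hm0 : m ≠ 0 := by rintro rfl; exact hP.1.2 (by simpa using hm)
  have hn0 : n ≠ 0 := by rintro rfl; exact hP.1.2 (by simpa using hn)
  have := hP.1.1 _ (hP.1.pow_mem hm hn0) _ (hP.1.pow_mem hn hm0)
  rw [inv_pow, ← pow_mul, ← pow_mul, mul_comm m n, inv_mul_cancel] at this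
  exact hP.1.2 this

theorem CommGroup.biOrderable : BiOrderable G := by
  obtain ⟨P, hP⟩ := exists_maximal_isMulClosedAvoidingOne (M := G)
  exact IsBiOrderCone.biOrderable ⟨fun ha hb => hP.1.1 _ ha _ hb, hP.1.2,
    mem_or_inv_mem_of_maximal hP, fun g ha => by rwa [mul_inv_cancel_comm]⟩

end CommGroup

section Nilpotent

variable {G : Type*} [Group G]

theorem Subgroup.isMulTorsionFree_of_forall_not_isOfFinOrder (H : Subgroup G)
    [IsMulCommutative H] (h : ∀ x : G, x ≠ 1 → ¬IsOfFinOrder x) : IsMulTorsionFree H :=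
  isMulTorsionFree_iff_not_isOfFinOrder.2 fun x hx (hfin : IsOfFinOrder x) =>
    h x (by simpa using hx) (H.subtype.isOfFinOrder hfin)

/-- With `c := (x * g)⁻¹ * (g * x)` central, `g * x ^ n * g⁻¹ = (x * c) ^ n = x ^ n * c ^ n`. -/
theorem mem_center_of_pow_mem_center [IsMulTorsionFree (center G)] {x : G}
    (hx : (x : G ⧸ center G) ∈ center (G ⧸ center G)) {n : ℕ} (hn : n ≠ 0)
    (hxn : x ^ n ∈ center G) : x ∈ center G := by
  refine mem_center_iff.2 fun g => ?_
  set c := (x * g)⁻¹ * (g * x)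
  have hc : c ∈ center G := QuotientGroup.eq.1 (by simpa using (mem_center_iff.1 hx g).symm)
  have hgx : g * x = x * g * c := by simp [c, mul_assoc]
  have hconj : g * x * g⁻¹ = x * c := by
    rw [hgx, mul_assoc x g c, mem_center_iff.1 hc g, ← mul_assoc, mul_inv_cancel_right]
  have hpow : x ^ n * c ^ n = x ^ n := by
    rw [← Commute.mul_pow (mem_center_iff.1 hc x) n, ← hconj, conj_pow,
      mem_center_iff.1 hxn g, mul_inv_cancel_right]
  have hc1 : c = 1 := by
    have : (⟨c, hc⟩ : center G) ^ n = 1 := Subtype.ext (by simpa using hpow)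
    simpa using (pow_eq_one_iff_left hn).1 this
  rw [hgx, hc1, mul_one]

theorem isMulTorsionFree_center_quotient_center [IsMulTorsionFree (center G)] :
    IsMulTorsionFree (center (G ⧸ center G)) := by
  refine isMulTorsionFree_iff_not_isOfFinOrder.2 fun z hz hfin => hz ?_
  obtain ⟨n, hn, hzn⟩ := isOfFinOrder_iff_pow_eq_one.1 hfin
  obtain ⟨⟨x⟩, hx⟩ := z
  have hxn : x ^ n ∈ center G := by
    rw [← QuotientGroup.eq_one_iff, QuotientGroup.mk_pow]
    exact congrArg Subtype.val hzn
  exact Subtype.ext ((QuotientGroup.eq_one_iff x).2 (mem_center_of_pow_mem_center hx hn.ne' hxn))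

theorem Group.IsNilpotent.biOrderable [Group.IsNilpotent G] [IsMulTorsionFree (center G)] :
    BiOrderable G := by
  refine Group.nilpotent_center_quotient_ind
    (P := fun G _ _ => IsMulTorsionFree (center G) → BiOrderable G) G ?_ ?_ ‹_›
  · intro G _ _ _
    refine IsBiOrderCone.biOrderable (P := (∅ : Set G)) ⟨fun ha => ha.elim, id, fun ha => ?_,
      fun _ ha => ha.elim⟩
    exact absurd (Subsingleton.elim _ _) ha
  · intro G _ _ ih _
    exact BiOrderable.of_center CommGroup.biOrderable (ih isMulTorsionFree_center_quotient_center)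

end Nilpotent

/-- Every residually torsion-free nilpotent group is bi-orderable. -/
theorem biOrderable_of_residually_torsionFree_nilpotent {G : Type*} [Group G]
    (h : ∀ g : G, g ≠ 1 → ∃ (K : Subgroup G) (hK : K.Normal), g ∉ K ∧
      @Group.IsNilpotent (G ⧸ K) (@QuotientGroup.Quotient.group G _ K hK) ∧
      (∀ x : G ⧸ K, x ≠ (@QuotientGroup.Quotient.group G _ K hK).one → ¬ @IsOfFinOrder (G ⧸ K)
        (@DivInvMonoid.toMonoid _
          (@Group.toDivInvMonoid _ (@QuotientGroup.Quotient.group G _ K hK))) x)) :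
    BiOrderable G := by
  choose K hK hgK hnil htf using fun g : {g : G // g ≠ 1} => h g g.2
  refine BiOrderable.of_residually K (fun g hg => ⟨⟨g, hg⟩, hgK _⟩) fun g => ?_
  have := hnil g
  have := (center (G ⧸ K g)).isMulTorsionFree_of_forall_not_isOfFinOrder (htf g)
  exact Group.IsNilpotent.biOrderable
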